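/- (Stationarity of the discretised Langevin velocity.) Consider the discrete Langevin process of the context with parameters γ, k, τ > 0. Then for every n ≥ 0 the velocity U_n has law N(0, kγ). -/

import Mathlib

open MeasureTheory ProbabilityTheory

/-- `φ(x) = (1 - exp(-x))/x`. -/
noncomputable def phi (x : ℝ) : ℝ := (1 - Real.exp (-x)) / x

/-- The discrete Langevin process with parameters `γ, k, τ`: an initial velocity
`U₀ ~ N(0, kγ)`, together with an i.i.d. sequence `(ε_n)` of 2-dimensional Gaussian
random vectors `ε_n = (ε_n¹, ε_n²)` with mean zero and covariance matrix `C` given by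
`C₁₁ = 2kτ(1 - 2φ(γτ) + φ(2γτ))`, `C₁₂ = C₂₁ = k(γτφ(γτ))²`, `C₂₂ = 2kγ²τφ(2γτ)`
(specified via the laws of all linear functionals), the whole sequence being
independent of `U₀`. -/
structure DiscreteLangevin {Ω : Type*} [MeasurableSpace Ω] (P : Measure Ω)
    (γ k τ : ℝ) where
  U0 : Ω → ℝ
  ε : ℕ → Ω → ℝ × ℝ
  meas_U0 : Measurable U0
  meas_ε : ∀ n, Measurable (ε n)
  law_U0 : P.map U0 = gaussianReal 0 (k * γ).toNNReal
  law_ε : ∀ (n : ℕ) (a b : ℝ),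
    P.map (fun ω => a * (ε n ω).1 + b * (ε n ω).2)
      = gaussianReal 0 (a ^ 2 * (2 * k * τ * (1 - 2 * phi (γ * τ) + phi (2 * γ * τ)))
          + 2 * a * b * (k * (γ * τ * phi (γ * τ)) ^ 2)
          + b ^ 2 * (2 * k * γ ^ 2 * τ * phi (2 * γ * τ))).toNNReal
  indep_ε : iIndepFun ε P
  indep_U0 : IndepFun U0 (fun ω => fun n => ε n ω) P

/-- The velocities of the discrete Langevin process:
`U_{n+1} = exp(-γτ)·U_n + ε_n²`. -/
noncomputable def DiscreteLangevin.U {Ω : Type*} [MeasurableSpace Ω] {P : Measure Ω}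
    {γ k τ : ℝ} (L : DiscreteLangevin P γ k τ) : ℕ → Ω → ℝ
  | 0 => L.U0
  | n + 1 => fun ω => Real.exp (-(γ * τ)) * L.U n ω + (L.ε n ω).2

/-- The displacements of the discrete Langevin process:
`ΔX_n = τφ(γτ)·U_n + ε_n¹`. -/
noncomputable def DiscreteLangevin.ΔX {Ω : Type*} [MeasurableSpace Ω] {P : Measure Ω}
    {γ k τ : ℝ} (L : DiscreteLangevin P γ k τ) (n : ℕ) : Ω → ℝ :=
  fun ω => τ * phi (γ * τ) * L.U n ω + (L.ε n ω).1

/-!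
`U_{n+1} = e^{-γτ} U_n + ε_n²` is a Gaussian AR(1) recursion. The velocity `U_n` is a measurable
function of `(U₀, ε_0, …, ε_{n-1})`, which is independent of `ε_n` because `U₀` is independent
of the whole noise sequence and the `ε_i` are mutually independent. Hence if `U_n ~ N(0, kγ)`,
then `U_{n+1} ~ N(0, e^{-2γτ} kγ + C₂₂)`, and `C₂₂ = 2kγ²τ φ(2γτ) = kγ (1 - e^{-2γτ})` makes
this variance `kγ` again.
-/

open scoped NNReal

lemma mul_phi {x : ℝ} (hx : x ≠ 0) : x * phi x = 1 - Real.exp (-x) := by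
  rw [phi, mul_div_cancel₀ _ hx]

lemma langevin_variance_stationary {γ k τ : ℝ} (hγ : 0 < γ) (hk : 0 < k) (hτ : 0 < τ) :
    .mk (Real.exp (-(γ * τ)) ^ 2) (sq_nonneg _) * (k * γ).toNNReal
      + (2 * k * γ ^ 2 * τ * phi (2 * γ * τ)).toNNReal = (k * γ).toNNReal := by
  have hC₂₂ : 2 * k * γ ^ 2 * τ * phi (2 * γ * τ) = k * γ * (1 - Real.exp (-(γ * τ)) ^ 2) := by
    rw [← Real.exp_nat_mul, show 2 * k * γ ^ 2 * τ * phi (2 * γ * τ)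
      = k * γ * (2 * γ * τ * phi (2 * γ * τ)) by ring, mul_phi (by positivity)]
    ring_nf
  have hexp : Real.exp (-(γ * τ)) ^ 2 ≤ 1 :=
    pow_le_one₀ (Real.exp_nonneg _) (Real.exp_le_one_iff.2 (neg_nonpos.2 (by positivity)))
  apply NNReal.coe_injective
  rw [NNReal.coe_add, NNReal.coe_mul, NNReal.coe_mk, hC₂₂,
    Real.coe_toNNReal _ (by positivity),
    Real.coe_toNNReal _ (mul_nonneg (by positivity) (sub_nonneg.2 hexp))]
  ring

namespace ProbabilityTheory

variable {Ω : Type*} {mΩ : MeasurableSpace Ω} {P : Measure Ω}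

lemma IndepFun.prodMk_indepFun_of_indepFun_prodMk {α β δ : Type*} [MeasurableSpace α]
    [MeasurableSpace β] [MeasurableSpace δ] [IsFiniteMeasure P]
    {X : Ω → α} {Y : Ω → β} {Z : Ω → δ} (hX : Measurable X) (hY : Measurable Y)
    (hZ : Measurable Z) (hXYZ : IndepFun X (fun ω ↦ (Y ω, Z ω)) P) (hYZ : IndepFun Y Z P) :
    IndepFun (fun ω ↦ (X ω, Y ω)) Z P := by
  have hXY : IndepFun X Y P := hXYZ.comp measurable_id measurable_fst
  rw [indepFun_iff_map_prod_eq_prod_map_map (by fun_prop) hZ.aemeasurable,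
    hXY.map_prod_eq_prod_map_map hX.aemeasurable hY.aemeasurable,
    ← (measurePreserving_prodAssoc _ _ _).symm.map_eq,
    ← hYZ.map_prod_eq_prod_map_map hY.aemeasurable hZ.aemeasurable,
    ← hXYZ.map_prod_eq_prod_map_map hX.aemeasurable (by fun_prop),
    Measure.map_map (by fun_prop) (by fun_prop)]
  rfl

lemma map_const_mul_add_of_indepFun_gaussianReal {X Y : Ω → ℝ} {v w : ℝ≥0}
    (hX : Measurable X) (hXY : IndepFun X Y P) (hXlaw : P.map X = gaussianReal 0 v)
    (hYlaw : P.map Y = gaussianReal 0 w) (c : ℝ) :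
    P.map (fun ω ↦ c * X ω + Y ω) = gaussianReal 0 (.mk (c ^ 2) (sq_nonneg c) * v + w) := by
  have hcX : P.map ((c * ·) ∘ X) = gaussianReal 0 (.mk (c ^ 2) (sq_nonneg c) * v) := by
    rw [← Measure.map_map (measurable_const_mul c) hX, hXlaw, gaussianReal_map_const_mul,
      mul_zero]
  have h := gaussianReal_add_gaussianReal_of_indepFun
    (hXY.comp (measurable_const_mul c) measurable_id) hcX hYlaw
  rwa [zero_add] at h

end ProbabilityTheory

namespace DiscreteLangevin

variable {Ω : Type*} [MeasurableSpace Ω] {P : Measure Ω} {γ k τ : ℝ}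
  (L : DiscreteLangevin P γ k τ)

def past (n : ℕ) (ω : Ω) : ℝ × (Fin n → ℝ × ℝ) := (L.U0 ω, fun i ↦ L.ε i ω)

lemma measurable_past (n : ℕ) : Measurable (L.past n) :=
  L.meas_U0.prodMk (measurable_pi_lambda _ fun i ↦ L.meas_ε i)

lemma indepFun_past_ε [IsProbabilityMeasure P] (n : ℕ) : IndepFun (L.past n) (L.ε n) P := by
  have hnoise : IndepFun (fun ω (i : Fin n) ↦ L.ε i ω) (L.ε n) P := by
    have hφ : Measurable fun (e : Finset.range n → ℝ × ℝ) (i : Fin n) ↦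
        e ⟨i, Finset.mem_range.2 i.2⟩ := by fun_prop
    have hψ : Measurable fun (e : ({n} : Finset ℕ) → ℝ × ℝ) ↦
        e ⟨n, Finset.mem_singleton_self n⟩ := measurable_pi_apply _
    exact (L.indep_ε.indepFun_finset _ _ (by simp) L.meas_ε).comp hφ hψ
  have hU0 : IndepFun L.U0 (fun ω ↦ (fun i : Fin n ↦ L.ε i ω, L.ε n ω)) P :=
    (L.indep_U0.comp (φ := id) (ψ := fun e ↦ (fun i : Fin n ↦ e i, e n)) measurable_id
      (by fun_prop) :)
  exact hU0.prodMk_indepFun_of_indepFun_prodMk L.meas_U0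
    (measurable_pi_lambda _ fun i ↦ L.meas_ε i) (L.meas_ε n) hnoise

lemma exists_measurable_U_eq_comp_past (n : ℕ) :
    ∃ g : ℝ × (Fin n → ℝ × ℝ) → ℝ, Measurable g ∧ L.U n = g ∘ L.past n := by
  induction n with
  | zero => exact ⟨Prod.fst, measurable_fst, rfl⟩
  | succ n ih =>
    obtain ⟨g, hg, hU⟩ := ih
    refine ⟨fun p ↦ Real.exp (-(γ * τ)) * g (p.1, Fin.init p.2) + (p.2 (Fin.last n)).2,
      by fun_prop, ?_⟩
    funext ω
    simp only [U, hU]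
    rfl

lemma indepFun_U_ε [IsProbabilityMeasure P] (n : ℕ) : IndepFun (L.U n) (L.ε n) P := by
  obtain ⟨g, hg, hU⟩ := L.exists_measurable_U_eq_comp_past n
  rw [hU]
  exact (L.indepFun_past_ε n).comp hg measurable_id

lemma measurable_U (n : ℕ) : Measurable (L.U n) := by
  obtain ⟨g, hg, hU⟩ := L.exists_measurable_U_eq_comp_past n
  exact hU ▸ hg.comp (L.measurable_past n)

lemma map_ε_snd (n : ℕ) : P.map (fun ω ↦ (L.ε n ω).2)
    = gaussianReal 0 (2 * k * γ ^ 2 * τ * phi (2 * γ * τ)).toNNReal := by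
  simpa using L.law_ε n 0 1

end DiscreteLangevin

/-- Stationarity of the discretised Langevin velocity: for every `n ≥ 0` the velocity
`U_n` has law `N(0, kγ)`. -/
theorem langevin_velocity_stationarity {Ω : Type*} [MeasurableSpace Ω]
    (P : Measure Ω) [IsProbabilityMeasure P]
    (γ k τ : ℝ) (hγ : 0 < γ) (hk : 0 < k) (hτ : 0 < τ)
    (L : DiscreteLangevin P γ k τ) :
    ∀ n : ℕ, P.map (L.U n) = gaussianReal 0 (k * γ).toNNReal := by
  intro n
  induction n with
  | zero => exact L.law_U0
  | succ n ih =>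
    rw [← langevin_variance_stationary hγ hk hτ]
    exact map_const_mul_add_of_indepFun_gaussianReal (L.measurable_U n)
      ((L.indepFun_U_ε n).comp measurable_id measurable_snd) ih (L.map_ε_snd n) _
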